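/- arXiv:1909.05060 — 3 statements merged into one kernel-verified Lean document; each statement's English description precedes it below -/
import Mathlib

section
/- Let g : ℝ^n → ℝ be a convex function with min g = 0 and argmin g nonempty, and suppose there exists a > 0 such that g(x) ≥ (a/2) dist(x, argmin g)² for all x ∈ ℝ^n. Then for every x ∈ ℝ^n, g*(x) − σ_{argmin g}(x) ≤ ‖x‖²/(2a). -/
open Filter Topology Finset Pointwise RealInnerProductSpace

noncomputable section

/-- The convex subdifferential of `f` at `x`. -/
def subdiff {E : Type*} [NormedAddCommGroup E] [InnerProductSpace ℝ E]
    (f : E → ℝ) (x : E) : Set E :=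
  {v | ∀ y, f x + ⟪v, y - x⟫ ≤ f y}

/-- The normal cone of a set `C` at `u`. -/
def normalCone {E : Type*} [NormedAddCommGroup E] [InnerProductSpace ℝ E]
    (C : Set E) (u : E) : Set E :=
  {p | ∀ y ∈ C, ⟪p, y - u⟫ ≤ 0}

/-- The set of global minimizers of `g`. -/
def argminSet {E : Type*} (g : E → ℝ) : Set E := {x | ∀ y, g x ≤ g y}

/-- The Fenchel conjugate of `g`, with values in the extended reals. -/
def fenchel {E : Type*} [NormedAddCommGroup E] [InnerProductSpace ℝ E]
    (g : E → ℝ) (u : E) : EReal :=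
  ⨆ x : E, ((⟪u, x⟫ - g x : ℝ) : EReal)

/-- The support function of a set `C`, with values in the extended reals. -/
def suppFn {E : Type*} [NormedAddCommGroup E] [InnerProductSpace ℝ E]
    (C : Set E) (u : E) : EReal :=
  ⨆ y ∈ C, ((⟪y, u⟫ : ℝ) : EReal)

/-- `w` is the proximal point `prox_{r f}(x)`, i.e. a minimizer of
`u ↦ f u + ‖u - x‖² / (2r)`. -/
def isProx {E : Type*} [NormedAddCommGroup E] [InnerProductSpace ℝ E]
    (r : ℝ) (f : E → ℝ) (x w : E) : Prop :=
  ∀ u, f w + ‖w - x‖ ^ 2 / (2 * r) ≤ f u + ‖u - x‖ ^ 2 / (2 * r)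

/-- Quadratic growth of `g` around its set of minimizers yields a quadratic bound
on `g* − σ_{argmin g}`. -/
theorem conjugate_sub_support_le {n : ℕ} (g : EuclideanSpace ℝ (Fin n) → ℝ)
    (hconv : ConvexOn ℝ Set.univ g) (hg0 : ∀ x, 0 ≤ g x)
    (hmin : ∃ x, g x = 0) (a : ℝ) (ha : 0 < a)
    (hgrowth : ∀ x, a / 2 * (Metric.infDist x (argminSet g)) ^ 2 ≤ g x) :
    ∀ x : EuclideanSpace ℝ (Fin n),
      fenchel g x - suppFn (argminSet g) x ≤ ((‖x‖ ^ 2 / (2 * a) : ℝ) : EReal) := by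
  intro x
  obtain ⟨x₀, hx₀⟩ := hmin
  have hx₀C : x₀ ∈ argminSet g := fun y => hx₀ ▸ hg0 y
  set C := argminSet g with hC
  have hne : C.Nonempty := ⟨x₀, hx₀C⟩
  have hc : (0:ℝ) ≤ ‖x‖ ^ 2 / (2 * a) := by positivity
  rcases eq_or_ne (suppFn C x) ⊤ with htop | htop
  · rw [htop, EReal.sub_top]
    exact bot_le
  · have hbot : ((⟪x₀, x⟫ : ℝ) : EReal) ≤ suppFn C x := le_iSup₂ (f := fun y (_ : y ∈ C) => ((⟪y, x⟫ : ℝ) : EReal)) x₀ hx₀C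
    have hSb : suppFn C x ≠ ⊥ := fun h => by simp [h] at hbot
    set σ := (suppFn C x).toReal with hσdef
    have hS : suppFn C x = (σ : EReal) := (EReal.coe_toReal htop hSb).symm
    have hσ : ∀ y ∈ C, ⟪y, x⟫ ≤ σ := by
      intro y hy
      have h1 : ((⟪y, x⟫ : ℝ) : EReal) ≤ suppFn C x :=
        le_iSup₂ (f := fun y (_ : y ∈ C) => ((⟪y, x⟫ : ℝ) : EReal)) y hy
      rw [hS] at h1
      exact_mod_cast h1
    have key : ∀ z, ⟪x, z⟫ - g z ≤ σ + ‖x‖ ^ 2 / (2 * a) := by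
      intro z
      set d := Metric.infDist z C with hd
      have hd0 : 0 ≤ d := Metric.infDist_nonneg
      have hdg : a / 2 * d ^ 2 ≤ g z := hgrowth z
      have hin : ⟪x, z⟫ ≤ σ + ‖x‖ * d := by
        by_cases hx : x = 0
        · have h0 : σ ≥ 0 := by
            have := hσ x₀ hx₀C
            simpa [hx] using this
          simp only [hx, inner_zero_left, norm_zero, zero_mul, add_zero]
          linarith
        · have hxn : 0 < ‖x‖ := norm_pos_iff.mpr hx
          have hdiv : (⟪x, z⟫ - σ) / ‖x‖ ≤ d := by
            by_contra hcon
            push_neg at hcon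
            obtain ⟨y, hy, hyd⟩ := (Metric.infDist_lt_iff hne).mp hcon
            have hble : (⟪x, z⟫ - σ) / ‖x‖ ≤ dist z y := by
              rw [div_le_iff₀ hxn]
              have h1 : ⟪x, z - y⟫ ≤ ‖x‖ * ‖z - y‖ := real_inner_le_norm x (z - y)
              have h2 : ⟪x, z⟫ = ⟪x, y⟫ + ⟪x, z - y⟫ := by
                rw [inner_sub_right]; ring
              have h3 : ⟪x, y⟫ ≤ σ := by
                have := hσ y hy
                rwa [real_inner_comm] at this
              rw [dist_eq_norm]
              linarith
            linarith
          rw [div_le_iff₀ hxn] at hdiv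
          have : ‖x‖ * d = d * ‖x‖ := mul_comm _ _
          linarith
      have h2a : (0:ℝ) < 2 * a := by linarith
      have heq : ‖x‖ ^ 2 / (2 * a) * (2 * a) = ‖x‖ ^ 2 := div_mul_cancel₀ _ (ne_of_gt h2a)
      nlinarith [sq_nonneg (a * d - ‖x‖), ha, mul_pos ha ha, hin, hdg]
    have hfen : fenchel g x ≤ ((σ + ‖x‖ ^ 2 / (2 * a) : ℝ) : EReal) := by
      refine iSup_le fun z => ?_
      exact_mod_cast EReal.coe_le_coe_iff.mpr (key z)
    rw [hS]
    calc fenchel g x - (σ : EReal)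
        ≤ ((σ + ‖x‖ ^ 2 / (2 * a) : ℝ) : EReal) - (σ : EReal) :=
          EReal.sub_le_sub hfen (le_refl _)
      _ = ((‖x‖ ^ 2 / (2 * a) : ℝ) : EReal) := by
          rw [← EReal.coe_sub]; ring_nf
end
end

section
/- Let g : ℝ^n → ℝ be convex with min g = 0 and argmin g nonempty, and suppose there exists a > 0 such that g(x) ≥ (a/2) dist(x, argmin g)² for all x. Let (α_k)_{k≥1} and (β_k)_{k≥1} be positive sequences with (α_k β_k)_{k≥1} bounded above and Σ_{k=1}^∞ 1/β_k² < +∞. Then for every p ∈ ℝ^n: (a) for each k ≥ 1, α_k β_k [g*(p/β_k) − σ_{argmin g}(p/β_k)] ≤ (α_k/(2a β_k)) ‖p‖²; and (b) Σ_{k=1}^∞ α_k β_k [g*(p/β_k) − σ_{argmin g}(p/β_k)] < +∞. -/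
open Filter Topology Finset Pointwise RealInnerProductSpace

noncomputable section

lemma key_ineq {E : Type*} [NormedAddCommGroup E] [InnerProductSpace ℝ E]
    (g : E → ℝ) (a : ℝ) (ha : 0 < a)
    (hgrowth : ∀ x, a / 2 * (Metric.infDist x (argminSet g)) ^ 2 ≤ g x)
    (hne : (argminSet g).Nonempty)
    (u x : E) (σ : ℝ) (hσ : ∀ y ∈ argminSet g, ⟪y, u⟫ ≤ σ) :
    ⟪u, x⟫ - g x ≤ σ + ‖u‖ ^ 2 / (2 * a) := by
  set C := argminSet g
  set d := Metric.infDist x C with hd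
  have hd0 : 0 ≤ d := Metric.infDist_nonneg
  have key : ∀ ε : ℝ, 0 < ε → ⟪u, x⟫ - g x ≤ σ + ‖u‖ ^ 2 / (2 * a) + ε := by
    intro ε hε
    set ε' := ε / (‖u‖ + 1) with hε'
    have hpos : 0 < ‖u‖ + 1 := by positivity
    have hε'pos : 0 < ε' := div_pos hε hpos
    obtain ⟨y, hyC, hxy⟩ := (Metric.infDist_lt_iff hne).1
      (by linarith : Metric.infDist x C < d + ε')
    have h1 : ⟪u, x⟫ = ⟪y, u⟫ + ⟪u, x - y⟫ := by
      rw [inner_sub_right, real_inner_comm y u]; ring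
    have h2 : ⟪u, x - y⟫ ≤ ‖u‖ * (d + ε') := by
      calc ⟪u, x - y⟫ ≤ ‖u‖ * ‖x - y‖ := real_inner_le_norm u (x - y)
        _ ≤ ‖u‖ * (d + ε') := by
            apply mul_le_mul_of_nonneg_left _ (norm_nonneg u)
            rw [← dist_eq_norm]; exact hxy.le
    have h3 : a / 2 * d ^ 2 ≤ g x := hgrowth x
    have h4 : ‖u‖ * d - a / 2 * d ^ 2 ≤ ‖u‖ ^ 2 / (2 * a) := by
      rw [le_div_iff₀ (by linarith : (0:ℝ) < 2 * a)]
      nlinarith [sq_nonneg (‖u‖ - a * d)]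
    have h5 : ‖u‖ * ε' ≤ ε := by
      rw [hε', mul_div_assoc', div_le_iff₀ hpos]
      nlinarith [norm_nonneg u]
    have h6 : ⟪y, u⟫ ≤ σ := hσ y hyC
    calc ⟪u, x⟫ - g x = ⟪y, u⟫ + ⟪u, x - y⟫ - g x := by rw [h1]
      _ ≤ σ + ‖u‖ * (d + ε') - a / 2 * d ^ 2 := by linarith
      _ = σ + (‖u‖ * d - a / 2 * d ^ 2) + ‖u‖ * ε' := by ring
      _ ≤ σ + ‖u‖ ^ 2 / (2 * a) + ε := by linarith
  linarith [le_of_forall_pos_le_add key]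

/-- Under quadratic growth of `g`, with `(α_k β_k)` bounded above and `Σ 1/β_k² < ∞`,
the penalization terms `α_k β_k [g*(p/β_k) − σ_{argmin g}(p/β_k)]` are bounded by
`(α_k/(2a β_k))‖p‖²` and have finite sum. -/
theorem attouch_czarnecki_condition {n : ℕ} (g : EuclideanSpace ℝ (Fin n) → ℝ)
    (hconv : ConvexOn ℝ Set.univ g) (hg0 : ∀ x, 0 ≤ g x)
    (hmin : ∃ x, g x = 0) (a : ℝ) (ha : 0 < a)
    (hgrowth : ∀ x, a / 2 * (Metric.infDist x (argminSet g)) ^ 2 ≤ g x)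
    (α β : ℕ → ℝ) (hα : ∀ k, 0 < α k) (hβ : ∀ k, 0 < β k)
    (hbdd : ∃ M : ℝ, ∀ k, α k * β k ≤ M)
    (hβsum : Summable (fun k => 1 / (β k) ^ 2)) :
    ∀ p : EuclideanSpace ℝ (Fin n),
      (∀ k, ((α k * β k : ℝ) : EReal) *
          (fenchel g ((β k)⁻¹ • p) - suppFn (argminSet g) ((β k)⁻¹ • p))
          ≤ ((α k / (2 * a * β k) * ‖p‖ ^ 2 : ℝ) : EReal)) ∧
      (∃ s : ℕ → ℝ, Summable s ∧ ∀ k,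
        ((α k * β k : ℝ) : EReal) *
          (fenchel g ((β k)⁻¹ • p) - suppFn (argminSet g) ((β k)⁻¹ • p))
          ≤ ((s k : ℝ) : EReal)) := by
  obtain ⟨x₀, hx₀⟩ := hmin
  have hx₀C : x₀ ∈ argminSet g := fun y => hx₀ ▸ hg0 y
  have hne : (argminSet g).Nonempty := ⟨x₀, hx₀C⟩
  intro p
  set C := argminSet g
  have main : ∀ k, ((α k * β k : ℝ) : EReal) *
      (fenchel g ((β k)⁻¹ • p) - suppFn C ((β k)⁻¹ • p))
      ≤ ((α k / (2 * a * β k) * ‖p‖ ^ 2 : ℝ) : EReal) := by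
    intro k
    have hbk := hβ k
    have hbne : β k ≠ 0 := hbk.ne'
    have hane : a ≠ 0 := ha.ne'
    set u : EuclideanSpace ℝ (Fin n) := (β k)⁻¹ • p with hu
    have hαβ : 0 < α k * β k := mul_pos (hα k) hbk
    rcases eq_or_ne (suppFn C u) ⊤ with htop | htop
    · rw [htop, EReal.sub_top, EReal.coe_mul_bot_of_pos hαβ]
      exact bot_le
    · have hle : ∀ y ∈ C, ((⟪y, u⟫ : ℝ) : EReal) ≤ suppFn C u := fun y hy =>
        le_biSup (fun y : EuclideanSpace ℝ (Fin n) => ((⟪y, u⟫ : ℝ) : EReal)) hy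
      have hbot : suppFn C u ≠ ⊥ := by
        intro h
        have := hle x₀ hx₀C
        rw [h] at this
        exact (EReal.coe_ne_bot _) (le_bot_iff.1 this)
      obtain ⟨σ, hσeq⟩ : ∃ σ : ℝ, suppFn C u = (σ : EReal) := by
        lift suppFn C u to ℝ using ⟨htop, hbot⟩ with σ hσ
        exact ⟨σ, rfl⟩
      have hσ : ∀ y ∈ C, ⟪y, u⟫ ≤ σ := by
        intro y hy
        have := hle y hy
        rw [hσeq] at this
        exact_mod_cast this
      have hfle : fenchel g u ≤ ((σ + ‖u‖ ^ 2 / (2 * a) : ℝ) : EReal) := by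
        apply iSup_le
        intro x
        exact_mod_cast key_ineq g a ha hgrowth hne u x σ hσ
      have hsub : fenchel g u - suppFn C u ≤ ((‖u‖ ^ 2 / (2 * a) : ℝ) : EReal) := by
        rw [hσeq]
        calc fenchel g u - (σ : EReal)
            ≤ ((σ + ‖u‖ ^ 2 / (2 * a) : ℝ) : EReal) - (σ : EReal) :=
              EReal.sub_le_sub hfle le_rfl
          _ = ((σ + ‖u‖ ^ 2 / (2 * a) - σ : ℝ) : EReal) := by rw [EReal.coe_sub]
          _ = ((‖u‖ ^ 2 / (2 * a) : ℝ) : EReal) := by norm_num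
      have hun : ‖u‖ = (β k)⁻¹ * ‖p‖ := by
        rw [hu, norm_smul, Real.norm_eq_abs, abs_of_pos (inv_pos.2 hbk)]
      have heq : (α k * β k) * (‖u‖ ^ 2 / (2 * a)) = α k / (2 * a * β k) * ‖p‖ ^ 2 := by
        rw [hun]
        field_simp
      calc ((α k * β k : ℝ) : EReal) * (fenchel g u - suppFn C u)
          ≤ ((α k * β k : ℝ) : EReal) * ((‖u‖ ^ 2 / (2 * a) : ℝ) : EReal) :=
            mul_le_mul_of_nonneg_left hsub (by exact_mod_cast hαβ.le)
        _ = (((α k * β k) * (‖u‖ ^ 2 / (2 * a)) : ℝ) : EReal) := by norm_cast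
        _ = ((α k / (2 * a * β k) * ‖p‖ ^ 2 : ℝ) : EReal) := by rw [heq]
  refine ⟨main, ⟨fun k => α k / (2 * a * β k) * ‖p‖ ^ 2, ?_, main⟩⟩
  obtain ⟨M, hM⟩ := hbdd
  have h2a : (0:ℝ) < 2 * a := by linarith
  apply Summable.of_nonneg_of_le
      (fun k => mul_nonneg (div_nonneg (hα k).le
        (by nlinarith [hβ k] : (0:ℝ) ≤ 2 * a * β k)) (sq_nonneg _))
      (fun k => ?_) (hβsum.mul_left (M * (‖p‖ ^ 2 / (2 * a))))
  have hbk := hβ k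
  have hbne : β k ≠ 0 := hbk.ne'
  have hane : a ≠ 0 := ha.ne'
  have h1 : α k / (2 * a * β k) * ‖p‖ ^ 2
      = (α k * β k) * (‖p‖ ^ 2 / (2 * a) * (1 / (β k) ^ 2)) := by
    field_simp
  rw [h1, mul_assoc M]
  exact mul_le_mul_of_nonneg_right (hM k)
    (mul_nonneg (div_nonneg (sq_nonneg _) h2a.le)
      (by positivity : (0:ℝ) ≤ 1 / (β k) ^ 2))
end
end

section
/- Let f : ℝ^n → ℝ be convex, h : ℝ^n → ℝ convex and differentiable, α > 0, and v, z ∈ ℝ^n. Let w = prox_{α f}(v − α∇h(v)) and let s ∈ ∂f(z). Then ‖w − z‖² − ‖v − z‖² + ‖w − v‖² ≤ 2α⟨∇h(v) + s, z − w⟩. -/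
open Filter Topology Finset Pointwise RealInnerProductSpace

noncomputable section

/-- Basic estimate for one proximal-gradient step against a subgradient at `z`. -/
theorem prox_grad_step_estimate {n : ℕ} (f h : EuclideanSpace ℝ (Fin n) → ℝ)
    (hf : ConvexOn ℝ Set.univ f) (hh : ConvexOn ℝ Set.univ h)
    (hhd : Differentiable ℝ h) (α : ℝ) (hα : 0 < α)
    (v z w s : EuclideanSpace ℝ (Fin n))
    (hw : isProx α f (v - α • gradient h v) w)
    (hs : s ∈ subdiff f z) :
    ‖w - z‖ ^ 2 - ‖v - z‖ ^ 2 + ‖w - v‖ ^ 2 ≤ 2 * α * ⟪gradient h v + s, z - w⟫ := by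
  set g := gradient h v with hg
  set x := v - α • g with hx
  have key : ⟪x - w, z - w⟫ ≤ α * (f z - f w) := by
    have main : ∀ t : ℝ, 0 < t → t ≤ 1 →
        ⟪x - w, z - w⟫ ≤ α * (f z - f w) + t * (‖z - w‖ ^ 2 / 2) := by
      intro t ht ht1
      have hconv := hf.2 (Set.mem_univ w) (Set.mem_univ z)
        (by linarith : (0:ℝ) ≤ 1 - t) ht.le (by ring)
      have hprox := hw ((1 - t) • w + t • z)
      have hu : (1 - t) • w + t • z - x = (w - x) + t • (z - w) := by
        module
      have hexp : ‖(1 - t) • w + t • z - x‖ ^ 2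
          = ‖w - x‖ ^ 2 + 2 * (t * ⟪w - x, z - w⟫) + t ^ 2 * ‖z - w‖ ^ 2 := by
        rw [hu, @norm_add_sq_real, real_inner_smul_right, norm_smul]
        simp [mul_pow, abs_of_pos ht]
      have h2α : (0:ℝ) < 2 * α := by linarith
      rw [hexp] at hprox
      have hprox2 : 2 * α * f w ≤ 2 * α * ((1 - t) • f w + t • f z)
          + (2 * (t * ⟪w - x, z - w⟫) + t ^ 2 * ‖z - w‖ ^ 2) := by
        have h' := mul_le_mul_of_nonneg_left hprox h2α.le
        rw [mul_add, mul_add, mul_div_cancel₀ _ (ne_of_gt h2α),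
          mul_div_cancel₀ _ (ne_of_gt h2α)] at h'
        have h'' := mul_le_mul_of_nonneg_left hconv h2α.le
        linarith
      simp only [smul_eq_mul] at hprox2
      have hinner : ⟪x - w, z - w⟫ = - ⟪w - x, z - w⟫ := by
        rw [show x - w = -(w - x) by abel, inner_neg_left]
      rw [hinner]
      nlinarith [hprox2, mul_pos ht ht, mul_pos hα ht, sq_nonneg t]
    by_contra hcon
    push_neg at hcon
    set ε := ⟪x - w, z - w⟫ - α * (f z - f w) with hε
    have hεpos : 0 < ε := by linarith
    have hc : (0:ℝ) ≤ ‖z - w‖ ^ 2 / 2 := by positivity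
    set t := min 1 (ε / (‖z - w‖ ^ 2 / 2 + 1)) with htdef
    have htpos : 0 < t := lt_min one_pos (by positivity)
    have := main t htpos (min_le_left _ _)
    have htle : t * (‖z - w‖ ^ 2 / 2) < ε := by
      calc t * (‖z - w‖ ^ 2 / 2) ≤ (ε / (‖z - w‖ ^ 2 / 2 + 1)) * (‖z - w‖ ^ 2 / 2) := by
            apply mul_le_mul_of_nonneg_right (min_le_right _ _) hc
        _ < ε := by
            rw [div_mul_eq_mul_div, div_lt_iff₀ (by positivity)]
            nlinarith
    linarith
  have hsz : α * (f z - f w) ≤ α * ⟪s, z - w⟫ := by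
    have := hs w
    have h1 : f z - f w ≤ -⟪s, w - z⟫ := by linarith
    have h2 : -⟪s, w - z⟫ = ⟪s, z - w⟫ := by
      rw [show z - w = -(w - z) by abel, inner_neg_right]
    rw [h2] at h1
    exact mul_le_mul_of_nonneg_left h1 hα.le
  have hxw : ⟪x - w, z - w⟫ = ⟪v - w, z - w⟫ - α * ⟪g, z - w⟫ := by
    rw [hx, show v - α • g - w = (v - w) - α • g by abel, inner_sub_left,
      real_inner_smul_left]
  have hmain : ⟪v - w, z - w⟫ ≤ α * ⟪g + s, z - w⟫ := by
    rw [inner_add_left]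
    rw [hxw] at key
    linarith
  have hid : ‖w - z‖ ^ 2 - ‖v - z‖ ^ 2 + ‖w - v‖ ^ 2 = 2 * ⟪v - w, z - w⟫ := by
    have h1 : v - z = (v - w) - (z - w) := by abel
    have h2 : w - z = -(z - w) := by abel
    have h3 : w - v = -(v - w) := by abel
    have e : ‖(v - w) - (z - w)‖ ^ 2
        = ‖v - w‖ ^ 2 - 2 * ⟪v - w, z - w⟫ + ‖z - w‖ ^ 2 := norm_sub_sq_real _ _
    rw [h1, h2, h3, norm_neg, norm_neg, e]
    ring
  rw [hid]
  linarith
end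
end
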